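/- Let X_n = ∑_{π ∈ S_t} (|ψ_π⟩⟨ψ_π|)^{⊗n} where |ψ_π⟩ are the normalized permutation states on (ℂ^d)^{⊗t} satisfying ∑_{π∈S_t} |⟨ψ_σ|ψ_π⟩|^n ≤ e^{τ/d^n} with τ = t(t−1)/2, and let G_{n,t} be the projector onto the support of X_n. Then ‖X_n − G_{n,t}‖_∞ ≤ e^{τ/d^n} − 1, and consequently (2 − e^{τ/d^n})·G_{n,t} ≤ X_n ≤ e^{τ/d^n}·G_{n,t}. -/

import Mathlib

open scoped Matrix BigOperators ComplexInnerProductSpace ComplexOrder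
open scoped Matrix.Norms.L2Operator

/-- The `n`-fold tensor power `(|ψ⟩⟨ψ|)^{⊗n}` of a rank-one projector, as a matrix in the
product basis. -/
noncomputable def outerPow (d t n : ℕ) (ψ : EuclideanSpace ℂ (Fin t → Fin d)) :
    Matrix (Fin n → Fin t → Fin d) (Fin n → Fin t → Fin d) ℂ :=
  Matrix.of fun f g => (∏ i : Fin n, ψ (f i)) * (starRingEnd ℂ) (∏ i : Fin n, ψ (g i))

/-!
Write `X = Bᴴ * B`, where the rows of `B` are the bras `⟨ψ_σ^{⊗n}|`; then `M = B * Bᴴ` is the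
entrywise `n`-th power of the Gram matrix. It has unit diagonal and absolute row sums at most
`E = exp (τ / d ^ n)`, so the Schur test gives `‖M - 1‖ ≤ E - 1`, i.e. `2 - E ≤ M ≤ E`, and hence
`(2 - E) • M ≤ M * M ≤ E • M`. Because `G` projects onto the range of `X`, there is a single `W`
with `G = Wᴴ * M * W` and `X = Wᴴ * (M * M) * W`, so conjugating by `W` yields
`(2 - E) • G ≤ X ≤ E • G`. Together with `0 ≤ G ≤ 1` this gives `‖X - G‖ ≤ E - 1`.
-/

open scoped MatrixOrder

section CStarAlgebra

variable {A : Type*} [CStarAlgebra A] [PartialOrder A] [StarOrderedRing A]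

theorem IsSelfAdjoint.norm_le_of_neg_le_of_le {a : A} (ha : IsSelfAdjoint a) {r : ℝ}
    (hr : 0 ≤ r) (h₁ : -algebraMap ℝ A r ≤ a) (h₂ : a ≤ algebraMap ℝ A r) : ‖a‖ ≤ r := by
  rw [← map_neg, algebraMap_le_iff_le_spectrum] at h₁
  rw [le_algebraMap_iff_spectrum_le] at h₂
  rw [← cfc_id ℝ a]
  exact norm_cfc_le hr fun x hx => abs_le.mpr ⟨h₁ x hx, h₂ x hx⟩

theorem IsStarProjection.norm_sub_le_of_smul_le_of_le_smul {e x : A} (he : IsStarProjection e)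
    {ε : ℝ} (hε : 0 ≤ ε) (h₁ : (1 - ε) • e ≤ x) (h₂ : x ≤ (1 + ε) • e) : ‖x - e‖ ≤ ε := by
  have hεe : ε • e ≤ algebraMap ℝ A ε := by
    rw [Algebra.algebraMap_eq_smul_one]
    exact smul_le_smul_of_nonneg_left he.le_one hε
  have hsa : IsSelfAdjoint (x - e) := by
    have := (IsSelfAdjoint.of_nonneg (sub_nonneg.mpr h₁)).sub
      (IsSelfAdjoint.of_nonneg (smul_nonneg hε he.nonneg))
    convert this using 1
    module
  refine hsa.norm_le_of_neg_le_of_le hε ?_ ?_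
  · calc -algebraMap ℝ A ε ≤ -(ε • e) := neg_le_neg hεe
      _ = (1 - ε) • e - e := by module
      _ ≤ x - e := sub_le_sub_right h₁ e
  · calc x - e ≤ (1 + ε) • e - e := sub_le_sub_right h₂ e
      _ = ε • e := by module
      _ ≤ algebraMap ℝ A ε := hεe

theorem CFC.sqrt_mul_algebraMap_mul_sqrt {a : A} (ha : 0 ≤ a) (r : ℝ) :
    CFC.sqrt a * algebraMap ℝ A r * CFC.sqrt a = r • a := by
  rw [← Algebra.commutes, mul_assoc, CFC.sqrt_mul_sqrt_self a ha, Algebra.smul_def]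

theorem CFC.sqrt_mul_self_mul_sqrt {a : A} (ha : 0 ≤ a) :
    CFC.sqrt a * a * CFC.sqrt a = a * a := by
  have h := CFC.sqrt_mul_sqrt_self a ha
  calc CFC.sqrt a * a * CFC.sqrt a = CFC.sqrt a * (CFC.sqrt a * CFC.sqrt a) * CFC.sqrt a := by
        rw [h]
    _ = (CFC.sqrt a * CFC.sqrt a) * (CFC.sqrt a * CFC.sqrt a) := by simp only [mul_assoc]
    _ = a * a := by rw [h]

theorem smul_le_mul_self_of_algebraMap_le {a : A} (ha : 0 ≤ a) {r : ℝ}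
    (h : algebraMap ℝ A r ≤ a) : r • a ≤ a * a := by
  simpa only [CFC.sqrt_mul_algebraMap_mul_sqrt ha, CFC.sqrt_mul_self_mul_sqrt ha] using
    conjugate_le_conjugate_of_nonneg h (CFC.sqrt_nonneg a)

theorem mul_self_le_smul_of_le_algebraMap {a : A} (ha : 0 ≤ a) {r : ℝ}
    (h : a ≤ algebraMap ℝ A r) : a * a ≤ r • a := by
  simpa only [CFC.sqrt_mul_algebraMap_mul_sqrt ha, CFC.sqrt_mul_self_mul_sqrt ha] using
    conjugate_le_conjugate_of_nonneg h (CFC.sqrt_nonneg a)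

theorem IsSelfAdjoint.mem_Icc_of_norm_sub_one_le {a : A} (ha : IsSelfAdjoint a)
    {ε : ℝ} (h : ‖a - 1‖ ≤ ε) :
    a ∈ Set.Icc (algebraMap ℝ A (1 - ε)) (algebraMap ℝ A (1 + ε)) := by
  have hε : algebraMap ℝ A ‖a - 1‖ ≤ algebraMap ℝ A ε := algebraMap_mono A h
  have h₁ := (ha.sub (.one A)).neg_algebraMap_norm_le_self
  have h₂ := (ha.sub (.one A)).le_algebraMap_norm_self
  rw [map_sub, map_add, map_one]
  constructor
  · calc 1 - algebraMap ℝ A ε ≤ 1 - algebraMap ℝ A ‖a - 1‖ := sub_le_sub_left hε 1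
      _ ≤ a := sub_le_iff_le_add.mpr (neg_le_sub_iff_le_add.mp h₁)
  · calc a ≤ 1 + algebraMap ℝ A ‖a - 1‖ := sub_le_iff_le_add'.mp h₂
      _ ≤ 1 + algebraMap ℝ A ε := add_le_add_right hε 1

end CStarAlgebra

namespace Matrix

theorem exists_mul_eq_of_range_mulVecLin_le {R m n k : Type*} [CommSemiring R] [Fintype n]
    [DecidableEq n] [Fintype k] {A : Matrix m n R} {B : Matrix m k R}
    (h : LinearMap.range A.mulVecLin ≤ LinearMap.range B.mulVecLin) :
    ∃ C : Matrix k n R, B * C = A := by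
  choose u hu using fun j => h ⟨Pi.single j 1, rfl⟩
  refine ⟨(Matrix.of u)ᵀ, ?_⟩
  ext i j
  have hij := congrFun (hu j) i
  rw [mulVecLin_apply, mulVecLin_apply, mulVec_single_one] at hij
  simpa [mul_apply, mulVec, dotProduct] using hij

theorem l2_opNorm_le_of_sum_norm_le {𝕜 m n : Type*} [RCLike 𝕜] [Fintype m] [Fintype n]
    [DecidableEq n] {A : Matrix m n 𝕜} {r : ℝ} (hr : 0 ≤ r) (hrow : ∀ i, ∑ j, ‖A i j‖ ≤ r)
    (hcol : ∀ j, ∑ i, ‖A i j‖ ≤ r) : ‖A‖ ≤ r := by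
  rw [l2_opNorm_def]
  refine ContinuousLinearMap.opNorm_le_bound _ hr fun x => ?_
  change ‖WithLp.toLp 2 (A *ᵥ x.ofLp)‖ ≤ r * ‖x‖
  refine le_of_pow_le_pow_left₀ two_ne_zero (by positivity) ?_
  have hrow_sq : ∀ i, ‖(A *ᵥ x.ofLp) i‖ ^ 2 ≤ (∑ j, ‖A i j‖) * ∑ j, ‖A i j‖ * ‖x j‖ ^ 2 := by
    intro i
    calc ‖(A *ᵥ x.ofLp) i‖ ^ 2 ≤ (∑ j, ‖A i j‖ * ‖x j‖) ^ 2 := by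
          gcongr
          exact (norm_sum_le _ _).trans_eq (by simp only [norm_mul])
      _ ≤ _ := Finset.sum_sq_le_sum_mul_sum_of_sq_le_mul _ (fun j _ => norm_nonneg _)
          (fun j _ => by positivity) fun j _ => le_of_eq (by ring)
  rw [EuclideanSpace.norm_sq_eq, mul_pow, EuclideanSpace.norm_sq_eq]
  calc ∑ i, ‖(A *ᵥ x.ofLp) i‖ ^ 2
      ≤ ∑ i, r * ∑ j, ‖A i j‖ * ‖x j‖ ^ 2 := by
        gcongr with i
        exact (hrow_sq i).trans (by gcongr; exact hrow i)
    _ = r * ∑ j, (∑ i, ‖A i j‖) * ‖x j‖ ^ 2 := by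
        rw [← Finset.mul_sum, Finset.sum_comm]
        simp only [Finset.sum_mul]
    _ ≤ r * ∑ j, r * ‖x j‖ ^ 2 := by gcongr with j; exact hcol j
    _ = r ^ 2 * ∑ j, ‖x j‖ ^ 2 := by rw [← Finset.mul_sum]; ring

variable {𝕜 ι κ : Type*} [RCLike 𝕜] [Fintype ι] [Fintype κ]

theorem conjTranspose_mul_mul_le_of_le {A B : Matrix κ κ 𝕜} (h : A ≤ B) (W : Matrix κ ι 𝕜) :
    Wᴴ * A * W ≤ Wᴴ * B * W := by
  rw [le_iff] at h ⊢
  simpa only [Matrix.mul_sub, Matrix.sub_mul] using h.conjTranspose_mul_mul_same W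

theorem exists_eq_conjTranspose_mul_mul_of_range_eq [DecidableEq ι] {B : Matrix κ ι 𝕜} {G : Matrix ι ι 𝕜}
    (hG : IsStarProjection G)
    (hrange : LinearMap.range G.mulVecLin = LinearMap.range (Bᴴ * B).mulVecLin) :
    ∃ W : Matrix κ ι 𝕜,
      G = Wᴴ * (B * Bᴴ) * W ∧ Bᴴ * B = Wᴴ * (B * Bᴴ * (B * Bᴴ)) * W := by
  obtain ⟨C, hC⟩ := exists_mul_eq_of_range_mulVecLin_le hrange.le
  obtain ⟨D, hD⟩ := exists_mul_eq_of_range_mulVecLin_le hrange.ge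
  have hGherm : Gᴴ = G := hG.isSelfAdjoint.star_eq
  have hGX : G * (Bᴴ * B) = Bᴴ * B := by
    rw [← hD, ← Matrix.mul_assoc, hG.isIdempotentElem.eq]
  have hXG : Bᴴ * B * G = Bᴴ * B := by
    simpa only [conjTranspose_mul, conjTranspose_conjTranspose, hGherm, Matrix.mul_assoc]
      using congrArg conjTranspose hGX
  have hGC : G = Cᴴ * (Bᴴ * B) := by
    simpa only [conjTranspose_mul, conjTranspose_conjTranspose, hGherm, Matrix.mul_assoc]
      using congrArg conjTranspose hC.symm
  -- `W = B * C`: then `G = G * G = Cᴴ * X * X * C` and `X = G * X * G = Cᴴ * X * X * X * C`.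
  refine ⟨B * C, ?_, ?_⟩
  · calc G = G * G := hG.isIdempotentElem.eq.symm
      _ = _ := by
        nth_rw 1 [hGC]; rw [← hC]
        simp only [conjTranspose_mul, Matrix.mul_assoc]
  · calc Bᴴ * B = G * (Bᴴ * B) * G := by rw [hGX, hXG]
      _ = _ := by
        nth_rw 1 [hGC]; rw [← hC]
        simp only [conjTranspose_mul, Matrix.mul_assoc]

theorem smul_le_conjTranspose_mul_self_of_range_eq [DecidableEq ι] [DecidableEq κ]
    {B : Matrix κ ι ℂ} {G : Matrix ι ι ℂ}
    (hG : IsStarProjection G)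
    (hrange : LinearMap.range G.mulVecLin = LinearMap.range (Bᴴ * B).mulVecLin) {r : ℝ}
    (h : algebraMap ℝ _ r ≤ B * Bᴴ) : r • G ≤ Bᴴ * B := by
  obtain ⟨W, hGW, hXW⟩ := exists_eq_conjTranspose_mul_mul_of_range_eq hG hrange
  have hM : 0 ≤ B * Bᴴ := nonneg_iff_posSemidef.mpr (posSemidef_self_mul_conjTranspose B)
  simpa only [hGW, hXW, Matrix.mul_smul, Matrix.smul_mul] using
    conjTranspose_mul_mul_le_of_le (smul_le_mul_self_of_algebraMap_le hM h) W

theorem conjTranspose_mul_self_le_smul_of_range_eq [DecidableEq ι] [DecidableEq κ]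
    {B : Matrix κ ι ℂ} {G : Matrix ι ι ℂ}
    (hG : IsStarProjection G)
    (hrange : LinearMap.range G.mulVecLin = LinearMap.range (Bᴴ * B).mulVecLin) {r : ℝ}
    (h : B * Bᴴ ≤ algebraMap ℝ _ r) : Bᴴ * B ≤ r • G := by
  obtain ⟨W, hGW, hXW⟩ := exists_eq_conjTranspose_mul_mul_of_range_eq hG hrange
  have hM : 0 ≤ B * Bᴴ := nonneg_iff_posSemidef.mpr (posSemidef_self_mul_conjTranspose B)
  simpa only [hGW, hXW, Matrix.mul_smul, Matrix.smul_mul] using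
    conjTranspose_mul_mul_le_of_le (mul_self_le_smul_of_le_algebraMap hM h) W

theorem norm_sub_one_le_of_sum_norm_le [DecidableEq κ] [Nonempty κ] {M : Matrix κ κ 𝕜}
    (hM : M.IsHermitian) (hdiag : ∀ i, M i i = 1) {r : ℝ} (hrow : ∀ i, ∑ j, ‖M i j‖ ≤ r) :
    ‖M - 1‖ ≤ r - 1 := by
  have hrow' : ∀ i, ∑ j, ‖(M - 1) i j‖ = ∑ j, ‖M i j‖ - 1 := by
    intro i
    have hterm : ∀ j, ‖(M - 1) i j‖ = ‖M i j‖ - if i = j then 1 else 0 := by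
      intro j
      by_cases hij : i = j
      · subst hij; simp [hdiag]
      · simp [hij]
    simp only [hterm, Finset.sum_sub_distrib, Finset.sum_ite_eq, Finset.mem_univ, if_true]
  have hsymm : ∀ i j, ‖(M - 1) i j‖ = ‖(M - 1) j i‖ := fun i j => by
    rw [← (hM.sub isHermitian_one).apply i j, norm_star]
  have hr : 0 ≤ r - 1 := by
    obtain ⟨i⟩ := ‹Nonempty κ›
    linarith [hrow' i, hrow i, Finset.sum_nonneg fun j (_ : j ∈ Finset.univ) =>
      norm_nonneg ((M - 1) i j)]
  refine l2_opNorm_le_of_sum_norm_le hr (fun i => ?_) fun j => ?_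
  · linarith [hrow' i, hrow i]
  · simp only [hsymm _ j]
    linarith [hrow' j, hrow j]

end Matrix

section TensorPowBras

variable {κ ι : Type*} [Fintype ι]

noncomputable def tensorPowBras (n : ℕ) (ψ : κ → EuclideanSpace ℂ ι) :
    Matrix κ (Fin n → ι) ℂ :=
  Matrix.of fun σ g => star (∏ i, ψ σ (g i))

theorem tensorPowBras_mul_conjTranspose_apply (n : ℕ) (ψ : κ → EuclideanSpace ℂ ι) (σ π : κ) :
    (tensorPowBras n ψ * (tensorPowBras n ψ)ᴴ) σ π = ⟪ψ σ, ψ π⟫ ^ n := by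
  have hinner : ⟪ψ σ, ψ π⟫ = ∑ a, star (ψ σ a) * ψ π a := by
    simp [PiLp.inner_apply, RCLike.inner_apply, mul_comm]
  simp only [hinner, Fintype.sum_pow, Matrix.mul_apply, Matrix.conjTranspose_apply,
    tensorPowBras, Matrix.of_apply, star_star, star_prod, Finset.prod_mul_distrib]

theorem sum_outerPow_eq_conjTranspose_mul_tensorPowBras [Fintype κ] (d t n : ℕ)
    (ψ : κ → EuclideanSpace ℂ (Fin t → Fin d)) :
    ∑ π, outerPow d t n (ψ π) = (tensorPowBras n ψ)ᴴ * tensorPowBras n ψ := by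
  ext f g
  simp [outerPow, Matrix.sum_apply, Matrix.mul_apply, tensorPowBras]

theorem norm_tensorPowBras_mul_conjTranspose_sub_one_le [Fintype κ] [DecidableEq κ] [Nonempty κ]
    {n : ℕ} {ψ : κ → EuclideanSpace ℂ ι} (hunit : ∀ σ, ‖ψ σ‖ = 1) {r : ℝ}
    (hrow : ∀ σ, ∑ π, ‖⟪ψ σ, ψ π⟫‖ ^ n ≤ r) :
    ‖tensorPowBras n ψ * (tensorPowBras n ψ)ᴴ - 1‖ ≤ r - 1 := by
  refine Matrix.norm_sub_one_le_of_sum_norm_le (Matrix.isHermitian_mul_conjTranspose_self _)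
    (fun σ => ?_) fun σ => ?_
  · rw [tensorPowBras_mul_conjTranspose_apply, inner_self_eq_norm_sq_to_K, hunit]
    simp
  · simpa only [tensorPowBras_mul_conjTranspose_apply, norm_pow] using hrow σ

end TensorPowBras

theorem Xn_close_to_support_projector_general (d t n : ℕ)
    (ψ : Equiv.Perm (Fin t) → EuclideanSpace ℂ (Fin t → Fin d))
    (hunit : ∀ π, ‖ψ π‖ = 1)
    (hGram : ∀ σ : Equiv.Perm (Fin t),
      (∑ π : Equiv.Perm (Fin t), ‖(⟪ψ σ, ψ π⟫ : ℂ)‖ ^ n) ≤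
        Real.exp (((t : ℝ) * ((t : ℝ) - 1) / 2) / (d : ℝ) ^ n))
    (G : Matrix (Fin n → Fin t → Fin d) (Fin n → Fin t → Fin d) ℂ)
    (hGproj : G * G = G) (hGherm : Gᴴ = G)
    (hGsupp : LinearMap.range G.mulVecLin =
      LinearMap.range (∑ π : Equiv.Perm (Fin t), outerPow d t n (ψ π)).mulVecLin) :
    ‖(∑ π : Equiv.Perm (Fin t), outerPow d t n (ψ π)) - G‖ ≤
        Real.exp (((t : ℝ) * ((t : ℝ) - 1) / 2) / (d : ℝ) ^ n) - 1 ∧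
    ((∑ π : Equiv.Perm (Fin t), outerPow d t n (ψ π)) -
        (((2 - Real.exp (((t : ℝ) * ((t : ℝ) - 1) / 2) / (d : ℝ) ^ n) : ℝ) : ℂ) • G)).PosSemidef ∧
    ((((Real.exp (((t : ℝ) * ((t : ℝ) - 1) / 2) / (d : ℝ) ^ n) : ℝ) : ℂ) • G) -
        (∑ π : Equiv.Perm (Fin t), outerPow d t n (ψ π))).PosSemidef := by
  set E := Real.exp (((t : ℝ) * ((t : ℝ) - 1) / 2) / (d : ℝ) ^ n)
  set B := tensorPowBras n ψ
  rw [sum_outerPow_eq_conjTranspose_mul_tensorPowBras] at hGsupp ⊢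
  have hG : IsStarProjection G := ⟨hGproj, hGherm⟩
  have hgram : ‖B * Bᴴ - 1‖ ≤ E - 1 := norm_tensorPowBras_mul_conjTranspose_sub_one_le hunit hGram
  obtain ⟨hlow, hupp⟩ :=
    (Matrix.isHermitian_mul_conjTranspose_self B).isSelfAdjoint.mem_Icc_of_norm_sub_one_le hgram
  have hlower := Matrix.smul_le_conjTranspose_mul_self_of_range_eq hG hGsupp hlow
  have hupper := Matrix.conjTranspose_mul_self_le_smul_of_range_eq hG hGsupp hupp
  have hnorm := hG.norm_sub_le_of_smul_le_of_le_smul ((norm_nonneg _).trans hgram) hlower hupper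
  rw [show 1 - (E - 1) = 2 - E by ring] at hlower
  rw [show 1 + (E - 1) = E by ring] at hupper
  refine ⟨hnorm, ?_, ?_⟩
  · rw [Complex.coe_smul]; exact Matrix.nonneg_iff_posSemidef.mp (sub_nonneg.mpr hlower)
  · rw [Complex.coe_smul]; exact Matrix.nonneg_iff_posSemidef.mp (sub_nonneg.mpr hupper)

theorem Xn_close_to_support_projector (d t n : ℕ) (hd : 2 ≤ d) (ht : 1 ≤ t) (hn : 1 ≤ n)
    (ψ : Equiv.Perm (Fin t) → EuclideanSpace ℂ (Fin t → Fin d))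
    (hunit : ∀ π, ‖ψ π‖ = 1)
    (hGram : ∀ σ : Equiv.Perm (Fin t),
      (∑ π : Equiv.Perm (Fin t), ‖(⟪ψ σ, ψ π⟫ : ℂ)‖ ^ n) ≤
        Real.exp (((t : ℝ) * ((t : ℝ) - 1) / 2) / (d : ℝ) ^ n))
    (G : Matrix (Fin n → Fin t → Fin d) (Fin n → Fin t → Fin d) ℂ)
    (hGproj : G * G = G) (hGherm : Gᴴ = G)
    (hGsupp : LinearMap.range G.mulVecLin =
      LinearMap.range (∑ π : Equiv.Perm (Fin t), outerPow d t n (ψ π)).mulVecLin) :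
    ‖(∑ π : Equiv.Perm (Fin t), outerPow d t n (ψ π)) - G‖ ≤
        Real.exp (((t : ℝ) * ((t : ℝ) - 1) / 2) / (d : ℝ) ^ n) - 1 ∧
    ((∑ π : Equiv.Perm (Fin t), outerPow d t n (ψ π)) -
        (((2 - Real.exp (((t : ℝ) * ((t : ℝ) - 1) / 2) / (d : ℝ) ^ n) : ℝ) : ℂ) • G)).PosSemidef ∧
    ((((Real.exp (((t : ℝ) * ((t : ℝ) - 1) / 2) / (d : ℝ) ^ n) : ℝ) : ℂ) • G) -
        (∑ π : Equiv.Perm (Fin t), outerPow d t n (ψ π))).PosSemidef :=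
  Xn_close_to_support_projector_general d t n ψ hunit hGram G hGproj hGherm hGsupp
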